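/- arXiv:1902.11146 — 4 statements merged into one kernel-verified Lean document; each statement's English description precedes it below -/
import Mathlib

section
/- Let k ≥ 2 and let F̃(t,x,y) be the family of symmetric matrices [[x + t·a, b·t + c·t·y], [b·t + c·t·y, y² + x^k + t·Σ_{i=0}^{k−2} d_i x^i]] with a, b, c, d_i ∈ ℂ. Define the ideal I_D(F̃) in the ring of polynomials in (t,x,y,t′,x′,y′) generated by t − t′ and the doubles of the three distinct entries of F̃, and define I_D(θ) generated by c(y − y′) and Σ_{i=1}^{k−2} d_i (x^i − x′^i). If c = 0, then I_D(θ) ⊆ I_D(F̃). -/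
/-!
For `c = 0` the generator `c (y - y')` vanishes. Subtracting `a (t - t')` from the double of
`x + t a` leaves `x - x'` in `I_D(F̃)`, and `x - x'` divides every `x^i - x'^i`.
-/

open MvPolynomial

namespace Ideal

variable {R : Type*} [CommRing R] {I : Ideal R}

theorem pow_sub_pow_mem_of_sub_mem {x y : R} (h : x - y ∈ I) (n : ℕ) : x ^ n - y ^ n ∈ I := by
  obtain ⟨q, hq⟩ := sub_dvd_pow_sub_pow x y n
  rw [hq]
  exact I.mul_mem_right q h

theorem sum_mul_pow_sub_pow_mem_of_sub_mem {ι : Type*} {x y : R} (h : x - y ∈ I)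
    (s : Finset ι) (c : ι → R) (e : ι → ℕ) : ∑ i ∈ s, c i * (x ^ e i - y ^ e i) ∈ I :=
  I.sum_mem fun i _ => I.mul_mem_left (c i) (pow_sub_pow_mem_of_sub_mem h (e i))

theorem sub_mem_of_add_mul_sub_mem {x y t t' a : R} (h : (x + t * a) - (y + t' * a) ∈ I)
    (ht : t - t' ∈ I) : x - y ∈ I := by
  have := I.sub_mem h (I.mul_mem_left a ht)
  convert this using 1
  ring

end Ideal

/-- Variables: `t = X 0, x = X 1, y = X 2, t' = X 3, x' = X 4, y' = X 5`. -/
theorem ID_theta_subset_ID_Ftilde_Dk2_general (k : ℕ) (a b c : ℂ) (d : ℕ → ℂ)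
    (hc : c = 0) :
    Ideal.span {(C c * (X 2 - X 5) : MvPolynomial (Fin 6) ℂ),
        ∑ i ∈ Finset.Icc 1 (k - 2), C (d i) * (X 1 ^ i - X 4 ^ i)} ≤
      Ideal.span {(X 0 - X 3 : MvPolynomial (Fin 6) ℂ),
        (X 1 + X 0 * C a) - (X 4 + X 3 * C a),
        (C b * X 0 + C c * X 0 * X 2) - (C b * X 3 + C c * X 3 * X 5),
        (X 2 ^ 2 + X 1 ^ k + X 0 * ∑ i ∈ Finset.range (k - 1), C (d i) * X 1 ^ i) -
          (X 5 ^ 2 + X 4 ^ k + X 3 * ∑ i ∈ Finset.range (k - 1), C (d i) * X 4 ^ i)} := by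
  set I := Ideal.span {(X 0 - X 3 : MvPolynomial (Fin 6) ℂ),
    (X 1 + X 0 * C a) - (X 4 + X 3 * C a),
    (C b * X 0 + C c * X 0 * X 2) - (C b * X 3 + C c * X 3 * X 5),
    (X 2 ^ 2 + X 1 ^ k + X 0 * ∑ i ∈ Finset.range (k - 1), C (d i) * X 1 ^ i) -
      (X 5 ^ 2 + X 4 ^ k + X 3 * ∑ i ∈ Finset.range (k - 1), C (d i) * X 4 ^ i)}
  have ht : (X 0 - X 3 : MvPolynomial (Fin 6) ℂ) ∈ I := Ideal.subset_span (by simp)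
  have hx : (X 1 - X 4 : MvPolynomial (Fin 6) ℂ) ∈ I :=
    Ideal.sub_mem_of_add_mul_sub_mem (a := C a) (Ideal.subset_span (by simp)) ht
  rw [Ideal.span_le, Set.insert_subset_iff, Set.singleton_subset_iff]
  exact ⟨by simp [hc], Ideal.sum_mul_pow_sub_pow_mem_of_sub_mem hx _ _ id⟩

/-- Variables: `t = X 0, x = X 1, y = X 2, t' = X 3, x' = X 4, y' = X 5`.
For the `D_{k+2}` family `F̃ = [[x + ta, bt + cty],[bt + cty, y² + x^k + tΣ d_i x^i]]`,
if `c = 0` then `I_D(θ) ⊆ I_D(F̃)`. -/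
theorem ID_theta_subset_ID_Ftilde_Dk2 (k : ℕ) (hk : 2 ≤ k) (a b c : ℂ) (d : ℕ → ℂ)
    (hc : c = 0) :
    Ideal.span {(C c * (X 2 - X 5) : MvPolynomial (Fin 6) ℂ),
        ∑ i ∈ Finset.Icc 1 (k - 2), C (d i) * (X 1 ^ i - X 4 ^ i)} ≤
      Ideal.span {(X 0 - X 3 : MvPolynomial (Fin 6) ℂ),
        (X 1 + X 0 * C a) - (X 4 + X 3 * C a),
        (C b * X 0 + C c * X 0 * X 2) - (C b * X 3 + C c * X 3 * X 5),
        (X 2 ^ 2 + X 1 ^ k + X 0 * ∑ i ∈ Finset.range (k - 1), C (d i) * X 1 ^ i) -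
          (X 5 ^ 2 + X 4 ^ k + X 3 * ∑ i ∈ Finset.range (k - 1), C (d i) * X 4 ^ i)} :=
  ID_theta_subset_ID_Ftilde_Dk2_general k a b c d hc
end

section
/- Let k ≥ 2 and c ∈ ℂ. Consider the curve φ(s) = (s, 2s², 2s, s, s², s) in ℂ⁶ with coordinates (t, x, y, t′, x′, y′). The pullback along φ of the ideal generated by x − x′, t·c(y − y′), and y² − y′² + x^k − x′^k + t·Σ_{i=1}^{k−2} d_i(x^i − x′^i) is contained in the ideal (s²) of ℂ[s]. Moreover, if the pullback φ*(c(y − y′)) = c·s lies in (s²), then c = 0. -/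
open MvPolynomial

/-
Along the curve both `x - x'` and `y² - y'²` pull back to multiples of `s²`, and so does every
`x^i - x'^i`, being a multiple of `x - x'`; the generator `t c (y - y')` pulls back to `c s²`.
On the other hand `c s` has vanishing `s`-coefficient only when `c = 0`.
-/

theorem Ideal.map_span_le_span_singleton_iff {R S F : Type*} [CommSemiring R] [CommSemiring S]
    [FunLike F R S] [RingHomClass F R S] (f : F) (s : Set R) (a : S) :
    Ideal.map f (Ideal.span s) ≤ Ideal.span {a} ↔ ∀ p ∈ s, a ∣ f p := by
  rw [Ideal.map_span, Ideal.span_le, Set.image_subset_iff]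
  simp [Set.subset_def, Ideal.mem_span_singleton]

theorem Polynomial.X_sq_dvd_C_mul_X_iff {R : Type*} [Semiring R] {c : R} :
    Polynomial.X ^ 2 ∣ Polynomial.C c * Polynomial.X ↔ c = 0 := by
  rw [Polynomial.X_pow_dvd_iff]
  refine ⟨fun h => by simpa using h 1 one_lt_two, ?_⟩
  rintro rfl
  simp

theorem pullback_Dk2_subset_s_sq_general (k : ℕ) (c : ℂ) (d : ℕ → ℂ) :
    Ideal.map (aeval (![Polynomial.X, 2 * Polynomial.X ^ 2, 2 * Polynomial.X,
        Polynomial.X, Polynomial.X ^ 2, Polynomial.X] : Fin 6 → Polynomial ℂ))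
      (Ideal.span {(X 1 - X 4 : MvPolynomial (Fin 6) ℂ),
        X 0 * C c * (X 2 - X 5),
        X 2 ^ 2 - X 5 ^ 2 + X 1 ^ k - X 4 ^ k +
          X 0 * ∑ i ∈ Finset.Icc 1 (k - 2), C (d i) * (X 1 ^ i - X 4 ^ i)}) ≤
      Ideal.span {(Polynomial.X ^ 2 : Polynomial ℂ)} ∧
    ((Polynomial.C c * Polynomial.X : Polynomial ℂ) ∈
        Ideal.span {(Polynomial.X ^ 2 : Polynomial ℂ)} → c = 0) := by
  refine ⟨?_, fun h => Polynomial.X_sq_dvd_C_mul_X_iff.mp (Ideal.mem_span_singleton.mp h)⟩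
  rw [Ideal.map_span_le_span_singleton_iff]
  rintro p (rfl | rfl | rfl)
  all_goals simp only [map_add, map_sub, map_mul, map_pow, map_sum, aeval_X, aeval_C,
    Polynomial.algebraMap_eq, Matrix.cons_val]
  all_goals set s : Polynomial ℂ := Polynomial.X
  · exact ⟨1, by ring⟩
  · exact ⟨Polynomial.C c, by ring⟩
  · have hx (i : ℕ) : s ^ 2 ∣ (2 * s ^ 2) ^ i - (s ^ 2) ^ i :=
      dvd_trans ⟨1, by ring⟩ (sub_dvd_pow_sub_pow _ _ i)
    rw [show (2 * s) ^ 2 - s ^ 2 + (2 * s ^ 2) ^ k - (s ^ 2) ^ k =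
      3 * s ^ 2 + ((2 * s ^ 2) ^ k - (s ^ 2) ^ k) by ring]
    exact dvd_add (dvd_add (dvd_mul_left _ _) (hx k))
      (Dvd.dvd.mul_left (Finset.dvd_sum fun i _ => (hx i).mul_left _) _)

/-- Variables: `t = X 0, x = X 1, y = X 2, t' = X 3, x' = X 4, y' = X 5`.
Pullback along the curve `φ(s) = (s, 2s², 2s, s, s², s)` of the ideal
`⟨x - x', tc(y - y'), y² - y'² + x^k - x'^k + tΣ d_i(x^i - x'^i)⟩` lies in `(s²)`;
moreover `c·s ∈ (s²)` forces `c = 0`. -/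
theorem pullback_Dk2_subset_s_sq (k : ℕ) (hk : 2 ≤ k) (c : ℂ) (d : ℕ → ℂ) :
    Ideal.map (aeval (![Polynomial.X, 2 * Polynomial.X ^ 2, 2 * Polynomial.X,
        Polynomial.X, Polynomial.X ^ 2, Polynomial.X] : Fin 6 → Polynomial ℂ))
      (Ideal.span {(X 1 - X 4 : MvPolynomial (Fin 6) ℂ),
        X 0 * C c * (X 2 - X 5),
        X 2 ^ 2 - X 5 ^ 2 + X 1 ^ k - X 4 ^ k +
          X 0 * ∑ i ∈ Finset.Icc 1 (k - 2), C (d i) * (X 1 ^ i - X 4 ^ i)}) ≤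
      Ideal.span {(Polynomial.X ^ 2 : Polynomial ℂ)} ∧
    ((Polynomial.C c * Polynomial.X : Polynomial ℂ) ∈
        Ideal.span {(Polynomial.X ^ 2 : Polynomial ℂ)} → c = 0) :=
  pullback_Dk2_subset_s_sq_general k c d
end

section
/- Let k ≥ 1, ℓ ≥ 2, r = min{k,ℓ}, and a_i, b_j ∈ ℂ. Consider the curve φ(s) = (s^{k+ℓ}, 2s^{k+ℓ}, 2s, s^{k+ℓ}, s^{k+ℓ}, s) in ℂ⁶ with coordinates (t, x, y, t′, x′, y′). Then the pullback along φ of the ideal generated by x − x′, y^k − y′^k + t·Σ_{i=1}^{k−1} a_i(y^i − y′^i), and y^ℓ − y′^ℓ + t·Σ_{j=1}^{ℓ−2} b_j(y^j − y′^j) is contained in the ideal (s^r) of ℂ[s]. -/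
/-!
Along the curve `y = 2y'`, so `y^m - y'^m = (2^m - 1) s^m` is divisible by `s^r` for `m ≥ r`,
while `t` and `x - x'` vanish to order `k + ℓ ≥ r`; hence each generator pulls back into `(s^r)`.
-/

open MvPolynomial

theorem Ideal.map_span_le_span_singleton {R S F : Type*} [CommSemiring R] [CommSemiring S]
    [FunLike F R S] [RingHomClass F R S] (f : F) {s : Set R} {g : S} (h : ∀ p ∈ s, g ∣ f p) :
    Ideal.map f (Ideal.span s) ≤ Ideal.span {g} := by
  rw [Ideal.map_span, Ideal.span_le]
  rintro _ ⟨p, hp, rfl⟩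
  exact Ideal.mem_span_singleton.mpr (h p hp)

theorem pow_dvd_mul_pow_sub_pow_add_pow_mul {R : Type*} [CommRing R] (z c q : R) {r m n : ℕ}
    (hm : r ≤ m) (hn : r ≤ n) : z ^ r ∣ (c * z) ^ m - z ^ m + z ^ n * q := by
  refine dvd_add (dvd_sub ?_ (pow_dvd_pow z hm)) ((pow_dvd_pow z hn).mul_right q)
  rw [mul_pow]
  exact (pow_dvd_pow z hm).mul_left _

theorem pullback_Akl_subset_s_r_general (k ℓ : ℕ) (a b : ℕ → ℂ) :
    Ideal.map (aeval (![Polynomial.X ^ (k + ℓ), 2 * Polynomial.X ^ (k + ℓ),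
        2 * Polynomial.X, Polynomial.X ^ (k + ℓ), Polynomial.X ^ (k + ℓ),
        Polynomial.X] : Fin 6 → Polynomial ℂ))
      (Ideal.span {(X 1 - X 4 : MvPolynomial (Fin 6) ℂ),
        X 2 ^ k - X 5 ^ k + X 0 * ∑ i ∈ Finset.Icc 1 (k - 1), C (a i) * (X 2 ^ i - X 5 ^ i),
        X 2 ^ ℓ - X 5 ^ ℓ + X 0 * ∑ j ∈ Finset.Icc 1 (ℓ - 2), C (b j) * (X 2 ^ j - X 5 ^ j)}) ≤
      Ideal.span {(Polynomial.X ^ min k ℓ : Polynomial ℂ)} := by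
  have hk : min k ℓ ≤ k := min_le_left k ℓ
  have hℓ : min k ℓ ≤ ℓ := min_le_right k ℓ
  have hkℓ : min k ℓ ≤ k + ℓ := hk.trans (Nat.le_add_right k ℓ)
  refine Ideal.map_span_le_span_singleton _ ?_
  rintro p (rfl | rfl | rfl) <;>
    simp only [map_add, map_sub, map_mul, map_pow, map_sum, aeval_X, aeval_C,
      Matrix.cons_val]
  · exact ((pow_dvd_pow _ hkℓ).mul_left 2).sub (pow_dvd_pow _ hkℓ)
  · exact pow_dvd_mul_pow_sub_pow_add_pow_mul _ _ _ hk hkℓ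
  · exact pow_dvd_mul_pow_sub_pow_add_pow_mul _ _ _ hℓ hkℓ

/-- Variables: `t = X 0, x = X 1, y = X 2, t' = X 3, x' = X 4, y' = X 5`.
For the `A_{k+ℓ-1}` family, the pullback along the curve
`φ(s) = (s^{k+ℓ}, 2s^{k+ℓ}, 2s, s^{k+ℓ}, s^{k+ℓ}, s)` of the double ideal `I_D(F̃)` is
contained in `(s^r)` with `r = min k ℓ`. -/
theorem pullback_Akl_subset_s_r (k ℓ : ℕ) (hk : 1 ≤ k) (hℓ : 2 ≤ ℓ) (a b : ℕ → ℂ) :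
    Ideal.map (aeval (![Polynomial.X ^ (k + ℓ), 2 * Polynomial.X ^ (k + ℓ),
        2 * Polynomial.X, Polynomial.X ^ (k + ℓ), Polynomial.X ^ (k + ℓ),
        Polynomial.X] : Fin 6 → Polynomial ℂ))
      (Ideal.span {(X 1 - X 4 : MvPolynomial (Fin 6) ℂ),
        X 2 ^ k - X 5 ^ k + X 0 * ∑ i ∈ Finset.Icc 1 (k - 1), C (a i) * (X 2 ^ i - X 5 ^ i),
        X 2 ^ ℓ - X 5 ^ ℓ + X 0 * ∑ j ∈ Finset.Icc 1 (ℓ - 2), C (b j) * (X 2 ^ j - X 5 ^ j)}) ≤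
      Ideal.span {(Polynomial.X ^ min k ℓ : Polynomial ℂ)} :=
  pullback_Akl_subset_s_r_general k ℓ a b
end

section
/- Let I be an ideal in the ring of real analytic function germs at 0 in ℝ^n generated by f₁,…,f_m, and suppose h is a germ such that there exist C > 0 and a neighborhood U of 0 with |h(z)| ≤ C·max_i |f_i(z)| for all z ∈ U. Then for every real analytic path φ: (ℝ,0) → (ℝ^n,0), the composite h∘φ belongs to the ideal of ℝ{s} generated by f₁∘φ,…,f_m∘φ. -/
/-!
Along the path everything becomes a germ in one variable, where growth is governed by the order
of vanishing: for analytic `F` and `G`, `F = O(G)` near `z₀` iff `ord G ≤ ord F`, and then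
`F = G • q` with `q` analytic. Choosing `j` with `f j ∘ φ` of minimal order, the inequality gives
`h ∘ φ = O(max_i |f i ∘ φ|) = O(f j ∘ φ)`, so `h ∘ φ` is a multiple of `f j ∘ φ`.
-/

open Filter Topology Asymptotics

section

variable {𝕜 E : Type*} [NontriviallyNormedField 𝕜] [NormedAddCommGroup E] [NormedSpace 𝕜 E]
  {f : 𝕜 → E} {z₀ : 𝕜}

theorem AnalyticAt.isBigO_pow_sub_iff_natCast_le_analyticOrderAt (hf : AnalyticAt 𝕜 f z₀)
    {n : ℕ} : f =O[𝓝 z₀] (fun z => (z - z₀) ^ n) ↔ n ≤ analyticOrderAt f z₀ := by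
  refine ⟨fun hO => ?_, fun hle => ?_⟩
  · by_contra! hlt
    obtain ⟨m, hm⟩ := ENat.ne_top_iff_exists.1 hlt.ne_top
    have hmn : m < n := by exact_mod_cast hm ▸ hlt
    obtain ⟨u, hu, hu0, hfu⟩ := hf.analyticOrderAt_eq_natCast.1 hm.symm
    -- off `z₀`, `u = (z - z₀)⁻ᵐ • f = O((z - z₀)ⁿ⁻ᵐ)`, which tends to `0`
    have huO : u =O[𝓝[≠] z₀] fun z => (z - z₀) ^ (n - m) := by
      refine ((isBigO_refl (fun z => ((z - z₀) ^ m)⁻¹) _).smul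
        (hO.mono nhdsWithin_le_nhds)).congr' ?_ ?_
      · filter_upwards [self_mem_nhdsWithin, hfu.filter_mono nhdsWithin_le_nhds] with z hz hfz
        rw [hfz, inv_smul_smul₀ (pow_ne_zero _ (sub_ne_zero.2 hz))]
      · filter_upwards [self_mem_nhdsWithin] with z hz
        rw [smul_eq_mul, pow_sub₀ _ (sub_ne_zero.2 hz) hmn.le, mul_comm]
    have hpow : Tendsto (fun z => (z - z₀) ^ (n - m)) (𝓝[≠] z₀) (𝓝 0) := by
      refine (Continuous.tendsto' (by fun_prop) z₀ 0 ?_).mono_left nhdsWithin_le_nhds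
      simp [Nat.sub_ne_zero_of_lt hmn]
    exact hu0 (tendsto_nhds_unique (hu.continuousAt.tendsto.mono_left nhdsWithin_le_nhds)
      (huO.trans_tendsto hpow))
  · obtain ⟨g, hg, hfg⟩ := (natCast_le_analyticOrderAt hf).1 hle
    refine ((isBigO_refl (fun z => (z - z₀) ^ n) _).smul
      (hg.continuousAt.tendsto.isBigO_one 𝕜)).congr' (hfg.mono fun _ h => h.symm) ?_
    simp

theorem AnalyticAt.exists_eventuallyEq_smul_of_analyticOrderAt_le {g : 𝕜 → 𝕜}
    (hf : AnalyticAt 𝕜 f z₀) (hg : AnalyticAt 𝕜 g z₀)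
    (hle : analyticOrderAt g z₀ ≤ analyticOrderAt f z₀) :
    ∃ q : 𝕜 → E, AnalyticAt 𝕜 q z₀ ∧ f =ᶠ[𝓝 z₀] fun z => g z • q z := by
  by_cases htop : analyticOrderAt g z₀ = ⊤
  · refine ⟨0, analyticAt_const, ?_⟩
    filter_upwards [analyticOrderAt_eq_top.1 (top_le_iff.1 (htop ▸ hle))] with z hz
    simp [hz]
  · obtain ⟨n, hn⟩ := ENat.ne_top_iff_exists.1 htop
    obtain ⟨u, hu, hu0, hgu⟩ := hg.analyticOrderAt_eq_natCast.1 hn.symm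
    obtain ⟨v, hv, hfv⟩ := (natCast_le_analyticOrderAt hf).1 (hn ▸ hle)
    refine ⟨fun z => (u z)⁻¹ • v z, (hu.inv hu0).smul hv, ?_⟩
    filter_upwards [hgu, hfv, hu.continuousAt.eventually_ne hu0] with z hgz hfz huz
    rw [hfz, hgz, smul_assoc, smul_inv_smul₀ huz]

theorem AnalyticAt.isBigO_iff_analyticOrderAt_le {g : 𝕜 → 𝕜} (hf : AnalyticAt 𝕜 f z₀)
    (hg : AnalyticAt 𝕜 g z₀) : f =O[𝓝 z₀] g ↔ analyticOrderAt g z₀ ≤ analyticOrderAt f z₀ := by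
  refine ⟨fun hO => ?_, fun hle => ?_⟩
  · refine ENat.forall_natCast_le_iff_le.1 fun n hn => ?_
    exact hf.isBigO_pow_sub_iff_natCast_le_analyticOrderAt.1
      (hO.trans (hg.isBigO_pow_sub_iff_natCast_le_analyticOrderAt.2 hn))
  · obtain ⟨q, hq, hfq⟩ := hf.exists_eventuallyEq_smul_of_analyticOrderAt_le hg hle
    refine ((isBigO_refl g _).smul (hq.continuousAt.tendsto.isBigO_one 𝕜)).congr'
      hfq.symm ?_
    simp

end

theorem Asymptotics.IsBigO.finset_sup'_norm {α ι E F : Type*} [NormedAddCommGroup E]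
    [NormedAddCommGroup F] {l : Filter α} {s : Finset ι} (hs : s.Nonempty) {A : ι → α → E}
    {g : α → F} (h : ∀ i ∈ s, A i =O[l] g) : (fun x => s.sup' hs fun i => ‖A i x‖) =O[l] g := by
  refine IsBigO.trans (IsBigO.of_bound' (Eventually.of_forall fun x => ?_))
    (IsBigO.fun_sum fun i hi => (h i hi).norm_left)
  obtain ⟨i, hi⟩ := id hs
  rw [Real.norm_of_nonneg ((norm_nonneg _).trans (s.le_sup' (fun i => ‖A i x‖) hi)),
    Real.norm_of_nonneg (s.sum_nonneg fun _ _ => norm_nonneg _)]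
  exact s.sup'_le _ _ fun j hj => s.single_le_sum (fun k _ => norm_nonneg (A k x)) hj

/-- One direction of Gaffney's criterion: if `|h(z)| ≤ C · max_i |f_i(z)|` on a neighborhood
of `0`, then for every real analytic path `φ : (ℝ,0) → (ℝⁿ,0)` the composite `h ∘ φ` lies in
the ideal of germs at `0` generated by the `f_i ∘ φ`: there are analytic `g_i` with
`h ∘ φ = Σ g_i · (f_i ∘ φ)` near `0`. -/
theorem curve_criterion_of_inequality (n m : ℕ) (hm : 0 < m)
    (f : Fin m → (Fin n → ℝ) → ℝ) (h : (Fin n → ℝ) → ℝ)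
    (hf : ∀ (i : Fin m) (z : Fin n → ℝ), AnalyticAt ℝ (f i) z)
    (hh : ∀ z : Fin n → ℝ, AnalyticAt ℝ h z)
    (C : ℝ) (U : Set (Fin n → ℝ)) (hU : U ∈ nhds (0 : Fin n → ℝ))
    (hineq : ∀ z ∈ U, |h z| ≤ C * (Finset.univ.sup'
      (by simpa [Finset.univ_nonempty_iff] using Fin.pos_iff_nonempty.mp hm)
      fun i : Fin m => |f i z|))
    (φ : ℝ → Fin n → ℝ) (hφ : ∀ s : ℝ, AnalyticAt ℝ φ s) (hφ0 : φ 0 = 0) :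
    ∃ g : Fin m → ℝ → ℝ, (∀ i, AnalyticAt ℝ (g i) 0) ∧
      ∀ᶠ s in nhds (0 : ℝ), h (φ s) = ∑ i, g i s * f i (φ s) := by
  have hne : (Finset.univ : Finset (Fin m)).Nonempty :=
    Finset.univ_nonempty_iff.2 (Fin.pos_iff_nonempty.1 hm)
  have hF : ∀ i, AnalyticAt ℝ (f i ∘ φ) 0 := fun i => (hf i (φ 0)).comp (hφ 0)
  have hH : AnalyticAt ℝ (h ∘ φ) 0 := (hh (φ 0)).comp (hφ 0)
  obtain ⟨j, -, hj⟩ := Finset.univ.exists_min_image (fun i => analyticOrderAt (f i ∘ φ) 0) hne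
  have hφU : ∀ᶠ s in 𝓝 0, φ s ∈ U := (hφ 0).continuousAt.preimage_mem_nhds (hφ0 ▸ hU)
  have hHsup : (h ∘ φ) =O[𝓝 0] fun s => Finset.univ.sup' hne fun i => ‖(f i ∘ φ) s‖ := by
    refine IsBigO.of_bound C (hφU.mono fun s hs => ?_)
    rw [Real.norm_of_nonneg ((norm_nonneg _).trans
      (Finset.univ.le_sup' (fun i => ‖(f i ∘ φ) s‖) (Finset.mem_univ j)))]
    exact hineq (φ s) hs
  have hHF : (h ∘ φ) =O[𝓝 0] (f j ∘ φ) := hHsup.trans <| IsBigO.finset_sup'_norm hne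
    fun i _ => ((hF i).isBigO_iff_analyticOrderAt_le (hF j)).2 (hj i (Finset.mem_univ i))
  obtain ⟨q, hq, hHq⟩ := hH.exists_eventuallyEq_smul_of_analyticOrderAt_le (hF j)
    ((hH.isBigO_iff_analyticOrderAt_le (hF j)).1 hHF)
  refine ⟨Pi.single j q, fun i => ?_, ?_⟩
  · rcases eq_or_ne i j with rfl | hij
    · simpa using hq
    · rw [Pi.single_eq_of_ne hij]
      exact analyticAt_const
  · filter_upwards [hHq] with s hs
    rw [Fintype.sum_eq_single j fun i hij => by simp [hij]]
    simpa [mul_comm] using hs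
end
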